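/- There exists a positive absolute constant c₀ such that the following holds. Let X̃ ∈ ℝ^{n₁×r} and Ỹ ∈ ℝ^{n₂×r}, set Ẽ_x = X̃ − X⋆ and Ẽ_y = Ỹ − Y⋆, and assume ‖Ẽ_x‖_F² + ‖Ẽ_y‖_F² ≤ c₀² σ_min/κ³. Let Λ ∈ ℝ^{r×r} be invertible with ‖Λ‖ ≤ 2 and ‖Λ⁻¹‖ ≤ 2. Then ‖(X̃Ỹᵀ − M⋆)ỸΛ‖_F² + ‖(X̃Ỹᵀ − M⋆)ᵀX̃Λ⁻¹‖_F² ≤ 54σ_max·(‖Ẽ_x Ỹᵀ‖_F² + ‖X̃ Ẽ_yᵀ‖_F²) + 27c₀²·(σ_max σ_min/κ³)·(‖Ẽ_x‖_F² + ‖Ẽ_y‖_F²). -/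

import Mathlib

open Matrix BigOperators

/-- Frobenius norm of a real matrix. -/
noncomputable def frobNorm {m n : ℕ} (A : Matrix (Fin m) (Fin n) ℝ) : ℝ :=
  Real.sqrt (∑ i, ∑ j, (A i j) ^ 2)

/-- Spectral norm (largest singular value) of a real matrix. -/
noncomputable def specNorm {m n : ℕ} (A : Matrix (Fin m) (Fin n) ℝ) : ℝ :=
  ‖LinearMap.toContinuousLinearMap (Matrix.toEuclideanLin A)‖

/-- Smallest singular value of a matrix with `r` columns (the `r`-th largest singular value). -/
noncomputable def sigmaMinCol {m r : ℕ} (A : Matrix (Fin m) (Fin r) ℝ) : ℝ :=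
  sInf { s | ∃ v : EuclideanSpace ℝ (Fin r), ‖v‖ = 1 ∧ s = ‖Matrix.toEuclideanLin A v‖ }

/-- Matrix inner product `⟨A, B⟩ = Tr(Bᵀ A)`. -/
noncomputable def matInner {m n : ℕ} (A B : Matrix (Fin m) (Fin n) ℝ) : ℝ :=
  Matrix.trace (Bᵀ * A)

/-- Euclidean norm on `ℝ^m`. -/
noncomputable def vec2Norm {m : ℕ} (y : Fin m → ℝ) : ℝ :=
  Real.sqrt (∑ i, (y i) ^ 2)

/-- The sensing operator `𝒜(M) = (⟨A_i, M⟩)_{i=1..m}`. -/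
noncomputable def senseOp {n₁ n₂ m : ℕ} (As : Fin m → Matrix (Fin n₁) (Fin n₂) ℝ)
    (M : Matrix (Fin n₁) (Fin n₂) ℝ) : Fin m → ℝ :=
  fun i => matInner (As i) M

/-- The adjoint operator `𝒜*(y) = ∑ i, y i • A i`. -/
noncomputable def senseAdj {n₁ n₂ m : ℕ} (As : Fin m → Matrix (Fin n₁) (Fin n₂) ℝ)
    (y : Fin m → ℝ) : Matrix (Fin n₁) (Fin n₂) ℝ :=
  ∑ i, y i • As i

/-- Rank-`k` restricted isometry property with constant `δ`. -/
def HasRIP {n₁ n₂ m : ℕ} (As : Fin m → Matrix (Fin n₁) (Fin n₂) ℝ) (k : ℕ) (δ : ℝ) : Prop :=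
  0 ≤ δ ∧ δ < 1 ∧
  ∀ M : Matrix (Fin n₁) (Fin n₂) ℝ, M.rank ≤ k →
    (1 - δ) * (frobNorm M) ^ 2 ≤ (vec2Norm (senseOp As M)) ^ 2 ∧
    (vec2Norm (senseOp As M)) ^ 2 ≤ (1 + δ) * (frobNorm M) ^ 2

/-- dist(Z, Z⋆): infimum over invertible `P` of
`sqrt(‖XP − X⋆‖_F² + ‖YP⁻ᵀ − Y⋆‖_F²)`. -/
noncomputable def distZ {n₁ n₂ r : ℕ} (X Xs : Matrix (Fin n₁) (Fin r) ℝ)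
    (Y Ys : Matrix (Fin n₂) (Fin r) ℝ) : ℝ :=
  sInf { v | ∃ P : Matrix (Fin r) (Fin r) ℝ, IsUnit P ∧
    v = Real.sqrt ((frobNorm (X * P - Xs)) ^ 2 + (frobNorm (Y * (P⁻¹)ᵀ - Ys)) ^ 2) }

/-! With `E = X̃Ỹᵀ − X⋆Y⋆ᵀ = Ẽ_xỸᵀ + X̃Ẽ_yᵀ − Ẽ_xẼ_yᵀ`, the mixed inequality
`‖AB‖_F ≤ ‖A‖_F ‖B‖` bounds the two terms by `‖E‖_F ‖Ỹ‖ ‖Λ‖` and `‖E‖_F ‖X̃‖ ‖Λ⁻¹‖`.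
Taking `c₀ = 1/2`, the errors satisfy `‖Ẽ_x‖_F, ‖Ẽ_y‖_F ≤ √σ_max / 2`, so `‖X̃‖, ‖Ỹ‖ ≤ (3/2)√σ_max`
and the sum is at most
`18 σ_max ‖E‖_F² ≤ 54 σ_max (‖Ẽ_xỸᵀ‖_F² + ‖X̃Ẽ_yᵀ‖_F² + ‖Ẽ_x‖_F²‖Ẽ_y‖_F²)`.
The quartic term is absorbed into the last summand through
`‖Ẽ_x‖_F²‖Ẽ_y‖_F² ≤ (‖Ẽ_x‖_F² + ‖Ẽ_y‖_F²)² / 4`. -/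

section Norms

variable {m n p : ℕ}

open scoped Matrix.Norms.Frobenius in
theorem frobNorm_eq_norm (A : Matrix (Fin m) (Fin n) ℝ) : frobNorm A = ‖A‖ := by
  simp [frobNorm, frobenius_norm_def, Real.sqrt_eq_rpow]

open scoped Matrix.Norms.L2Operator in
theorem specNorm_eq_norm (A : Matrix (Fin m) (Fin n) ℝ) : specNorm A = ‖A‖ := rfl

open scoped Matrix.Norms.Frobenius in
theorem frobNorm_nonneg (A : Matrix (Fin m) (Fin n) ℝ) : 0 ≤ frobNorm A :=
  frobNorm_eq_norm A ▸ norm_nonneg A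

open scoped Matrix.Norms.Frobenius in
theorem frobNorm_add_le (A B : Matrix (Fin m) (Fin n) ℝ) :
    frobNorm (A + B) ≤ frobNorm A + frobNorm B := by
  simpa only [frobNorm_eq_norm] using norm_add_le A B

open scoped Matrix.Norms.Frobenius in
theorem frobNorm_sub_le (A B : Matrix (Fin m) (Fin n) ℝ) :
    frobNorm (A - B) ≤ frobNorm A + frobNorm B := by
  simpa only [frobNorm_eq_norm] using norm_sub_le A B

open scoped Matrix.Norms.Frobenius in
theorem frobNorm_transpose (A : Matrix (Fin m) (Fin n) ℝ) : frobNorm Aᵀ = frobNorm A := by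
  simp only [frobNorm_eq_norm, frobenius_norm_transpose]

open scoped Matrix.Norms.L2Operator in
theorem specNorm_nonneg (A : Matrix (Fin m) (Fin n) ℝ) : 0 ≤ specNorm A := norm_nonneg _

open scoped Matrix.Norms.L2Operator in
theorem specNorm_add_le (A B : Matrix (Fin m) (Fin n) ℝ) :
    specNorm (A + B) ≤ specNorm A + specNorm B := norm_add_le A B

open scoped Matrix.Norms.L2Operator in
theorem specNorm_transpose (A : Matrix (Fin m) (Fin n) ℝ) : specNorm Aᵀ = specNorm A :=
  Matrix.l2_opNorm_conjTranspose A

open scoped Matrix.Norms.L2Operator in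
theorem specNorm_mul_le (A : Matrix (Fin m) (Fin n) ℝ) (B : Matrix (Fin n) (Fin p) ℝ) :
    specNorm (A * B) ≤ specNorm A * specNorm B := Matrix.l2_opNorm_mul A B

open scoped Matrix.Norms.L2Operator in
theorem specNorm_diagonal (v : Fin n → ℝ) : specNorm (Matrix.diagonal v) = ‖v‖ :=
  Matrix.l2_opNorm_diagonal v

open scoped Matrix.Norms.L2Operator in
theorem specNorm_le_one_of_transpose_mul_self_eq_one {U : Matrix (Fin m) (Fin n) ℝ}
    (hU : Uᵀ * U = 1) : specNorm U ≤ 1 := by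
  have h : specNorm U * specNorm U ≤ 1 := by
    rw [specNorm_eq_norm, ← Matrix.l2_opNorm_conjTranspose_mul_self,
      conjTranspose_eq_transpose_of_trivial, hU, ← Matrix.diagonal_one, Matrix.l2_opNorm_diagonal]
    exact pi_norm_le_iff_of_nonneg zero_le_one |>.2 fun _ => by simp
  nlinarith [specNorm_nonneg U]

theorem frobNorm_sq_eq_sum_norm_row_sq (A : Matrix (Fin m) (Fin n) ℝ) :
    frobNorm A ^ 2 = ∑ i, ‖WithLp.toLp 2 (A i)‖ ^ 2 := by
  rw [frobNorm, Real.sq_sqrt (by positivity)]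
  simp [EuclideanSpace.norm_sq_eq]

theorem frobNorm_mul_le_frobNorm_mul_specNorm (A : Matrix (Fin m) (Fin n) ℝ)
    (B : Matrix (Fin n) (Fin p) ℝ) : frobNorm (A * B) ≤ frobNorm A * specNorm B := by
  have hrow : ∀ i, ‖WithLp.toLp 2 ((A * B) i)‖ ≤ specNorm B * ‖WithLp.toLp 2 (A i)‖ := by
    intro i
    rw [Matrix.mul_apply_eq_vecMul, ← Matrix.mulVec_transpose, ← specNorm_transpose]
    exact Matrix.l2_opNorm_mulVec Bᵀ (WithLp.toLp 2 (A i))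
  refine (sq_le_sq₀ (frobNorm_nonneg _)
    (mul_nonneg (frobNorm_nonneg A) (specNorm_nonneg B))).1 ?_
  calc frobNorm (A * B) ^ 2 = ∑ i, ‖WithLp.toLp 2 ((A * B) i)‖ ^ 2 :=
        frobNorm_sq_eq_sum_norm_row_sq _
    _ ≤ ∑ i, (specNorm B * ‖WithLp.toLp 2 (A i)‖) ^ 2 := by gcongr with i; exact hrow i
    _ = (frobNorm A * specNorm B) ^ 2 := by
        simp only [mul_pow, frobNorm_sq_eq_sum_norm_row_sq, ← Finset.mul_sum, mul_comm]

theorem frobNorm_mul_le_specNorm_mul_frobNorm (A : Matrix (Fin m) (Fin n) ℝ)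
    (B : Matrix (Fin n) (Fin p) ℝ) : frobNorm (A * B) ≤ specNorm A * frobNorm B := by
  simpa only [← Matrix.transpose_mul, frobNorm_transpose, specNorm_transpose, mul_comm]
    using frobNorm_mul_le_frobNorm_mul_specNorm Bᵀ Aᵀ

open scoped Matrix.Norms.Frobenius in
theorem specNorm_le_frobNorm (A : Matrix (Fin m) (Fin n) ℝ) : specNorm A ≤ frobNorm A := by
  refine ContinuousLinearMap.opNorm_le_bound _ (frobNorm_nonneg A) fun x => ?_
  calc ‖Matrix.toEuclideanLin A x‖ = ‖Matrix.replicateCol Unit (A *ᵥ x)‖ := by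
        simp [Matrix.toLpLin_apply]
    _ = ‖A * Matrix.replicateCol Unit x‖ := by rw [Matrix.replicateCol_mulVec]
    _ ≤ ‖A‖ * ‖Matrix.replicateCol Unit x‖ := Matrix.frobenius_norm_mul _ _
    _ = frobNorm A * ‖x‖ := by simp [frobNorm_eq_norm]

end Norms

section Factors

variable {n₁ n₂ r : ℕ}

theorem specNorm_mul_diagonal_sqrt_le {U : Matrix (Fin n₁) (Fin r) ℝ} (hU : Uᵀ * U = 1)
    {d : Fin r → ℝ} {c : ℝ} (hd : ∀ i, d i ≤ c) :
    specNorm (U * Matrix.diagonal (fun i => Real.sqrt (d i))) ≤ Real.sqrt c := by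
  have hsqrt : ‖fun i => Real.sqrt (d i)‖ ≤ Real.sqrt c :=
    pi_norm_le_iff_of_nonneg (Real.sqrt_nonneg c) |>.2 fun i =>
      (Real.norm_of_nonneg (Real.sqrt_nonneg _)).trans_le (Real.sqrt_le_sqrt (hd i))
  calc specNorm (U * Matrix.diagonal (fun i => Real.sqrt (d i)))
      ≤ specNorm U * ‖fun i => Real.sqrt (d i)‖ := specNorm_diagonal _ ▸ specNorm_mul_le _ _
    _ ≤ 1 * Real.sqrt c :=
      mul_le_mul (specNorm_le_one_of_transpose_mul_self_eq_one hU) hsqrt (norm_nonneg _)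
        zero_le_one
    _ = Real.sqrt c := one_mul _

theorem mul_diagonal_sqrt_mul_transpose (U : Matrix (Fin n₁) (Fin r) ℝ)
    (V : Matrix (Fin n₂) (Fin r) ℝ) {d : Fin r → ℝ} (hd : ∀ i, 0 ≤ d i) :
    U * Matrix.diagonal (fun i => Real.sqrt (d i)) *
        (V * Matrix.diagonal (fun i => Real.sqrt (d i)))ᵀ =
      U * Matrix.diagonal d * Vᵀ := by
  rw [Matrix.transpose_mul, Matrix.diagonal_transpose, Matrix.mul_assoc,
    ← Matrix.mul_assoc _ _ Vᵀ, Matrix.diagonal_mul_diagonal, ← Matrix.mul_assoc]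
  simp_rw [Real.mul_self_sqrt (hd _)]

theorem specNorm_le_add_frobNorm_sub (A B : Matrix (Fin n₁) (Fin r) ℝ) :
    specNorm B ≤ specNorm A + frobNorm (B - A) := by
  simpa using (specNorm_add_le A (B - A)).trans (by gcongr; exact specNorm_le_frobNorm _)

theorem frobNorm_mul_transpose_sub_le (Xs Xt : Matrix (Fin n₁) (Fin r) ℝ)
    (Ys Yt : Matrix (Fin n₂) (Fin r) ℝ) :
    frobNorm (Xt * Ytᵀ - Xs * Ysᵀ) ≤
      frobNorm ((Xt - Xs) * Ytᵀ) + frobNorm (Xt * (Yt - Ys)ᵀ) +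
        frobNorm (Xt - Xs) * frobNorm (Yt - Ys) := by
  have hsplit : Xt * Ytᵀ - Xs * Ysᵀ =
      (Xt - Xs) * Ytᵀ + Xt * (Yt - Ys)ᵀ - (Xt - Xs) * (Yt - Ys)ᵀ := by
    simp only [Matrix.transpose_sub, Matrix.sub_mul, Matrix.mul_sub]
    abel
  have hcross :
      frobNorm ((Xt - Xs) * (Yt - Ys)ᵀ) ≤ frobNorm (Xt - Xs) * frobNorm (Yt - Ys) := by
    refine (frobNorm_mul_le_frobNorm_mul_specNorm _ _).trans ?_
    rw [specNorm_transpose]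
    exact mul_le_mul_of_nonneg_left (specNorm_le_frobNorm _) (frobNorm_nonneg _)
  rw [hsplit]
  exact (frobNorm_sub_le _ _).trans (add_le_add (frobNorm_add_le _ _) hcross)

theorem frobNorm_mul_mul_le {m : ℕ} (E : Matrix (Fin m) (Fin n₁) ℝ)
    (X : Matrix (Fin n₁) (Fin r) ℝ) (Λ : Matrix (Fin r) (Fin r) ℝ) :
    frobNorm (E * (X * Λ)) ≤ frobNorm E * specNorm X * specNorm Λ := by
  rw [← Matrix.mul_assoc]
  refine (frobNorm_mul_le_frobNorm_mul_specNorm _ _).trans ?_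
  gcongr
  · exact specNorm_nonneg _
  · exact frobNorm_mul_le_frobNorm_mul_specNorm _ _

end Factors

theorem frobNorm_sq_residual_mul_add_le {n₁ n₂ r : ℕ} {Xs Xt : Matrix (Fin n₁) (Fin r) ℝ}
    {Ys Yt : Matrix (Fin n₂) (Fin r) ℝ} {Λ Λ' : Matrix (Fin r) (Fin r) ℝ} {s : ℝ}
    (hXs : specNorm Xs ≤ s) (hYs : specNorm Ys ≤ s)
    (hEx : frobNorm (Xt - Xs) ≤ s / 2) (hEy : frobNorm (Yt - Ys) ≤ s / 2)
    (hΛ : specNorm Λ ≤ 2) (hΛ' : specNorm Λ' ≤ 2) :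
    frobNorm ((Xt * Ytᵀ - Xs * Ysᵀ) * (Yt * Λ)) ^ 2 +
        frobNorm ((Xt * Ytᵀ - Xs * Ysᵀ)ᵀ * (Xt * Λ')) ^ 2 ≤
      54 * s ^ 2 * (frobNorm ((Xt - Xs) * Ytᵀ) ^ 2 + frobNorm (Xt * (Yt - Ys)ᵀ) ^ 2 +
        (frobNorm (Xt - Xs) * frobNorm (Yt - Ys)) ^ 2) := by
  set E := Xt * Ytᵀ - Xs * Ysᵀ
  have hF := frobNorm_nonneg E
  have hs : 0 ≤ s := (specNorm_nonneg Xs).trans hXs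
  have hXt : specNorm Xt ≤ 3 / 2 * s := (specNorm_le_add_frobNorm_sub Xs Xt).trans (by linarith)
  have hYt : specNorm Yt ≤ 3 / 2 * s := (specNorm_le_add_frobNorm_sub Ys Yt).trans (by linarith)
  have h₁ : frobNorm (E * (Yt * Λ)) ≤ 3 * s * frobNorm E := by
    refine (frobNorm_mul_mul_le _ _ _).trans ?_
    nlinarith [specNorm_nonneg Yt, mul_le_mul hYt hΛ (specNorm_nonneg Λ) (by positivity)]
  have h₂ : frobNorm (Eᵀ * (Xt * Λ')) ≤ 3 * s * frobNorm E := by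
    refine (frobNorm_mul_mul_le _ _ _).trans ?_
    rw [frobNorm_transpose]
    nlinarith [specNorm_nonneg Xt, mul_le_mul hXt hΛ' (specNorm_nonneg Λ') (by positivity)]
  have hE := frobNorm_mul_transpose_sub_le Xs Xt Ys Yt
  set T₁ := frobNorm ((Xt - Xs) * Ytᵀ)
  set T₂ := frobNorm (Xt * (Yt - Ys)ᵀ)
  set P := frobNorm (Xt - Xs) * frobNorm (Yt - Ys)
  have hE3 : frobNorm E ^ 2 ≤ 3 * (T₁ ^ 2 + T₂ ^ 2 + P ^ 2) := by
    nlinarith [pow_le_pow_left₀ hF hE 2, sq_nonneg (T₁ - T₂), sq_nonneg (T₁ - P),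
      sq_nonneg (T₂ - P)]
  calc frobNorm (E * (Yt * Λ)) ^ 2 + frobNorm (Eᵀ * (Xt * Λ')) ^ 2
      ≤ (3 * s * frobNorm E) ^ 2 + (3 * s * frobNorm E) ^ 2 :=
        add_le_add (pow_le_pow_left₀ (frobNorm_nonneg _) h₁ 2)
          (pow_le_pow_left₀ (frobNorm_nonneg _) h₂ 2)
    _ = 18 * s ^ 2 * frobNorm E ^ 2 := by ring
    _ ≤ 54 * s ^ 2 * (T₁ ^ 2 + T₂ ^ 2 + P ^ 2) := by
        nlinarith [mul_le_mul_of_nonneg_left hE3 (sq_nonneg s)]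

/-- upper bound on `β₁ + β₂`: there is an absolute constant
`c₀ > 0` such that if the error satisfies `‖Ẽ_x‖_F² + ‖Ẽ_y‖_F² ≤ c₀²σ_min/κ³` and
`Λ` is invertible with `‖Λ‖ ≤ 2` and `‖Λ⁻¹‖ ≤ 2`, then
`‖(X̃Ỹᵀ−M⋆)ỸΛ‖_F² + ‖(X̃Ỹᵀ−M⋆)ᵀX̃Λ⁻¹‖_F² ≤ 54σ_max(‖Ẽ_xỸᵀ‖_F² + ‖X̃Ẽ_yᵀ‖_F²) + 27c₀²(σ_maxσ_min/κ³)(‖Ẽ_x‖_F² + ‖Ẽ_y‖_F²)`. -/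
theorem beta_upper_bound :
    ∃ c₀ : ℝ, 0 < c₀ ∧
      ∀ (n₁ n₂ r : ℕ)
        (Ustar : Matrix (Fin n₁) (Fin r) ℝ) (Vstar : Matrix (Fin n₂) (Fin r) ℝ)
        (d : Fin r → ℝ), (∀ i, 0 < d i) →
        Ustarᵀ * Ustar = 1 → Vstarᵀ * Vstar = 1 →
        ∀ (Mstar : Matrix (Fin n₁) (Fin n₂) ℝ),
          Mstar = Ustar * Matrix.diagonal d * Vstarᵀ →
        ∀ (Xstar : Matrix (Fin n₁) (Fin r) ℝ) (Ystar : Matrix (Fin n₂) (Fin r) ℝ),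
          Xstar = Ustar * Matrix.diagonal (fun i => Real.sqrt (d i)) →
          Ystar = Vstar * Matrix.diagonal (fun i => Real.sqrt (d i)) →
        ∀ (σmax σmin : ℝ),
          IsGreatest (Set.range d) σmax → IsLeast (Set.range d) σmin →
        ∀ (Xt : Matrix (Fin n₁) (Fin r) ℝ) (Yt : Matrix (Fin n₂) (Fin r) ℝ),
          (frobNorm (Xt - Xstar)) ^ 2 + (frobNorm (Yt - Ystar)) ^ 2 ≤
            c₀ ^ 2 * σmin / (σmax / σmin) ^ 3 →
        ∀ (Λ : Matrix (Fin r) (Fin r) ℝ), IsUnit Λ →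
          specNorm Λ ≤ 2 → specNorm Λ⁻¹ ≤ 2 →
          (frobNorm ((Xt * Ytᵀ - Mstar) * (Yt * Λ))) ^ 2 +
              (frobNorm ((Xt * Ytᵀ - Mstar)ᵀ * (Xt * Λ⁻¹))) ^ 2 ≤
            54 * σmax * ((frobNorm ((Xt - Xstar) * Ytᵀ)) ^ 2 +
                (frobNorm (Xt * (Yt - Ystar)ᵀ)) ^ 2) +
              27 * c₀ ^ 2 * (σmax * σmin / (σmax / σmin) ^ 3) *
                ((frobNorm (Xt - Xstar)) ^ 2 + (frobNorm (Yt - Ystar)) ^ 2) := by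
  refine ⟨1 / 2, one_half_pos, ?_⟩
  intro n₁ n₂ r Ustar Vstar d hd hU hV Mstar hM Xstar Ystar hX hY σmax σmin hmax hmin
    Xt Yt herr Λ _ hΛ hΛinv
  have hσmin : 0 < σmin := by obtain ⟨i, rfl⟩ := hmin.1; exact hd i
  have hσ : σmin ≤ σmax := hmin.2 hmax.1
  have hσmax : 0 < σmax := hσmin.trans_le hσ
  set q := σmin / (σmax / σmin) ^ 3
  have hq : 0 ≤ q ∧ q ≤ σmax :=
    ⟨by positivity, (div_le_self hσmin.le (one_le_pow₀ ((one_le_div hσmin).2 hσ))).trans hσ⟩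
  set a := frobNorm (Xt - Xstar)
  set b := frobNorm (Yt - Ystar)
  have hab : a ^ 2 + b ^ 2 ≤ q / 4 := herr.trans_eq (by ring)
  have hs := Real.sq_sqrt hσmax.le
  have ha : a ≤ Real.sqrt σmax / 2 := by
    nlinarith [frobNorm_nonneg (Xt - Xstar), Real.sqrt_nonneg σmax]
  have hb : b ≤ Real.sqrt σmax / 2 := by
    nlinarith [frobNorm_nonneg (Yt - Ystar), Real.sqrt_nonneg σmax]
  have hdmax : ∀ i, d i ≤ σmax := fun i => hmax.2 ⟨i, rfl⟩
  have hMstar : Mstar = Xstar * Ystarᵀ := by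
    rw [hM, hX, hY, mul_diagonal_sqrt_mul_transpose _ _ fun i => (hd i).le]
  have key := frobNorm_sq_residual_mul_add_le (hX ▸ specNorm_mul_diagonal_sqrt_le hU hdmax)
    (hY ▸ specNorm_mul_diagonal_sqrt_le hV hdmax) ha hb hΛ hΛinv
  rw [hs] at key
  have hab2 : (a * b) ^ 2 ≤ q * (a ^ 2 + b ^ 2) / 16 := by
    nlinarith [sq_nonneg (a ^ 2 - b ^ 2),
      mul_le_mul_of_nonneg_left hab (by positivity : 0 ≤ a ^ 2 + b ^ 2)]
  rw [hMstar, mul_div_assoc]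
  nlinarith [mul_le_mul_of_nonneg_left hab2 hσmax.le,
    mul_nonneg hσmax.le (mul_nonneg hq.1 (by positivity : 0 ≤ a ^ 2 + b ^ 2))]
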